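/- Let K be a quadratic field in which −3 is a square (so K = ℚ(√−3)) and let E be the elliptic curve y² = x³ + 16 over K. Then the torsion subgroup E(K)_tors is isomorphic to ℤ/3ℤ ⊕ ℤ/3ℤ. -/

import Mathlib

/-- The Weierstrass curve `y² = x³ + 16` over `K`, i.e. with coefficients
`a₁ = a₂ = a₃ = a₄ = 0`, `a₆ = 16`. -/
def curveE (K : Type*) [Field K] : WeierstrassCurve K :=
  ⟨0, 0, 0, 0, 16⟩

/-!
Over `K = ℚ(√−3) = ℚ(ζ₃)` every point of `E : y² = x³ + 16` is a flex. For an affine point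
`(x, y)` with `x ≠ 0` and `s² = −3` one has `(12 + s y)³ + (12 − s y)³ = (−6x)³`, so Fermat's Last
Theorem for exponent 3 over `ℚ(ζ₃)` forces `s y = ±12`, i.e. `x³ = −64`. The flexes are the points
with `x (x³ + 64) = 0` and satisfy `2P = −P`, so `E(K)` is an `𝔽₃`-vector space. It contains
`O, (0, ±4), (−4, 4s)` and has at most `1 + 4·4 < 27` elements, hence exactly `9`.
-/

open NumberField Module WeierstrassCurve WeierstrassCurve.Affine
  IsCyclotomicExtension.Rat.Three

-- Kummer's descent for `a³ + b³ = u c³` in `ℤ[ζ₃]` is private to this Mathlib file.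
open private FermatLastTheoremForThreeGen FermatLastTheoremForThreeGen.Solution'.mk
  FermatLastTheoremForThreeGen.exists_Solution_of_Solution'
  FermatLastTheoremForThreeGen.Solution.exists_minimal
  FermatLastTheoremForThreeGen.Solution.exists_Solution_multiplicity_lt
  from Mathlib.NumberTheory.FLT.Three

theorem IsCoprime.of_cube_add_cube_add_cube_eq_zero {R : Type*} [CommRing R] {a b c : R}
    (hab : IsCoprime a b) (h : a ^ 3 + b ^ 3 + c ^ 3 = 0) : IsCoprime a c := by
  have h3 : IsCoprime (a ^ 3) (-(b ^ 3 + a ^ 3 * 1)) := (hab.pow.add_mul_left_right 1).neg_right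
  rw [show -(b ^ 3 + a ^ 3 * 1) = c ^ 3 by linear_combination -h] at h3
  exact (IsCoprime.pow_iff three_pos three_pos).mp h3

theorem FermatLastTheoremWith.of_isCoprime {R : Type*} [CommRing R] [IsDomain R] [IsBezout R]
    {n : ℕ} (hn : n ≠ 0)
    (h : ∀ a b c : R, a ≠ 0 → b ≠ 0 → c ≠ 0 → IsCoprime a b → a ^ n + b ^ n ≠ c ^ n) :
    FermatLastTheoremWith R n := by
  classical
  let _ := IsBezout.toGCDDomain R
  intro a b c ha hb hc H
  obtain ⟨a', b', ha', hb', hunit⟩ := extract_gcd a b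
  set d := gcd a b
  have hd : d ≠ 0 := fun h0 ↦ ha (by rw [ha', h0, zero_mul])
  obtain ⟨c', hc'⟩ : d ∣ c := by
    rw [← IsIntegrallyClosed.pow_dvd_pow_iff hn, ← H, ha', hb', mul_pow, mul_pow, ← mul_add]
    exact dvd_mul_right _ _
  rw [ha'] at ha
  rw [hb'] at hb
  rw [hc'] at hc
  refine h a' b' c' (right_ne_zero_of_mul ha) (right_ne_zero_of_mul hb) (right_ne_zero_of_mul hc)
    (gcd_isUnit_iff_isRelPrime.mp hunit).isCoprime ?_
  rw [ha', hb', hc', mul_pow, mul_pow, mul_pow, ← mul_add] at H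
  exact mul_left_cancel₀ (pow_ne_zero n hd) H

theorem FermatLastTheoremWith.of_isFractionRing {R K : Type*} [CommRing R] [IsDomain R] [Field K]
    [Algebra R K] [IsFractionRing R K] {n : ℕ} (h : FermatLastTheoremWith R n) :
    FermatLastTheoremWith K n := by
  intro a b c ha hb hc H
  obtain ⟨p, q, hq, rfl⟩ := IsFractionRing.div_surjective R a
  obtain ⟨r, t, ht, rfl⟩ := IsFractionRing.div_surjective R b
  obtain ⟨u, v, hv, rfl⟩ := IsFractionRing.div_surjective R c
  have hp : p ≠ 0 := by rintro rfl; simp at ha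
  have hr : r ≠ 0 := by rintro rfl; simp at hb
  have hu : u ≠ 0 := by rintro rfl; simp at hc
  have hq' := nonZeroDivisors.ne_zero hq
  have ht' := nonZeroDivisors.ne_zero ht
  have hv' := nonZeroDivisors.ne_zero hv
  refine h (p * t * v) (r * q * v) (u * q * t) (by simp [*]) (by simp [*]) (by simp [*])
    (IsFractionRing.injective R K ?_)
  have hq0 := IsFractionRing.to_map_ne_zero_of_mem_nonZeroDivisors (K := K) hq
  have ht0 := IsFractionRing.to_map_ne_zero_of_mem_nonZeroDivisors (K := K) ht
  have hv0 := IsFractionRing.to_map_ne_zero_of_mem_nonZeroDivisors (K := K) hv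
  rw [div_pow, div_pow, div_pow, div_add_div _ _ (pow_ne_zero _ hq0) (pow_ne_zero _ ht0),
    div_eq_div_iff (mul_ne_zero (pow_ne_zero _ hq0) (pow_ne_zero _ ht0)) (pow_ne_zero _ hv0)] at H
  simp only [map_add, map_pow, map_mul]
  linear_combination H

theorem nonempty_linearEquiv_zmod_prod_of_card {p : ℕ} [Fact p.Prime] {V : Type*}
    [AddCommGroup V] [Module (ZMod p) V] [Finite V] (hlow : p < Nat.card V)
    (hup : Nat.card V < p ^ 3) : Nonempty (V ≃ₗ[ZMod p] ZMod p × ZMod p) := by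
  have hp : 1 < p := (Fact.out : p.Prime).one_lt
  have hcard : Nat.card V = p ^ finrank (ZMod p) V := by
    rw [Module.natCard_eq_pow_finrank (K := ZMod p), Nat.card_zmod]
  rw [hcard] at hlow hup
  have h1 : 1 < finrank (ZMod p) V := (pow_lt_pow_iff_right₀ hp).mp (by simpa using hlow)
  have h3 : finrank (ZMod p) V < 3 := (pow_lt_pow_iff_right₀ hp).mp hup
  exact ⟨LinearEquiv.ofFinrankEq V (ZMod p × ZMod p) (by simp; omega)⟩

theorem WeierstrassCurve.Affine.natCard_point {F : Type*} [Field F] (W : Affine F) [W.IsElliptic]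
    (h : {xy : F × F | W.Equation xy.1 xy.2}.Finite) :
    Nat.card W.Point = {xy : F × F | W.Equation xy.1 xy.2}.ncard + 1 := by
  have : Finite {xy : F × F // W.Equation xy.1 xy.2} := h.to_subtype
  rw [Nat.card_congr (W.pointEquiv.trans (Equiv.optionEquivSumPUnit.{0} _)), Nat.card_sum,
    Nat.card_of_subsingleton (PUnit.unit : PUnit.{1}), ← Nat.card_coe_set_eq]
  rfl

section Eisenstein

variable {K : Type*} [Field K] {ζ : K} (hζ : IsPrimitiveRoot ζ 3)

theorem IsPrimitiveRoot.toInteger_sub_one_sq : (hζ.toInteger - 1) ^ 2 = -3 * hζ.toInteger := by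
  have h := eta_sq_add_eta_add_one hζ
  rw [IsUnit.unit_spec] at h
  linear_combination h

variable [NumberField K] [IsCyclotomicExtension {3} ℚ K]

theorem fermatLastTheoremForThreeGen : FermatLastTheoremForThreeGen hζ := by
  intro a b c u hc ha hb hcdvd coprime H
  obtain ⟨S, -⟩ := FermatLastTheoremForThreeGen.exists_Solution_of_Solution'
    (FermatLastTheoremForThreeGen.Solution'.mk a b c u ha hb hc coprime hcdvd H)
  obtain ⟨Smin, hSmin⟩ := S.exists_minimal
  obtain ⟨Sfin, hSfin⟩ := Smin.exists_Solution_multiplicity_lt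
  exact (hSmin Sfin).not_gt hSfin

theorem IsPrimitiveRoot.not_toInteger_sub_one_pow_four_dvd_three :
    ¬ (hζ.toInteger - 1) ^ 4 ∣ 3 := by
  have h3 : (3 : 𝓞 K) = (hζ.toInteger - 1) ^ 2 * (-hζ.toInteger ^ 2) := by
    linear_combination hζ.toInteger ^ 2 * hζ.toInteger_sub_one_sq - 3 * hζ.toInteger_cube_eq_one
  have hunit : IsUnit (-hζ.toInteger ^ 2) :=
    ((hζ.toInteger_isPrimitiveRoot.isUnit three_ne_zero).pow 2).neg
  have hprime := hζ.zeta_sub_one_prime'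
  set l := hζ.toInteger - 1
  rintro ⟨k, hk⟩
  rw [h3, show l ^ 4 * k = l ^ 2 * (l ^ 2 * k) by ring] at hk
  have hdvd : l ∣ -hζ.toInteger ^ 2 :=
    ⟨l * k, by rw [mul_left_cancel₀ (pow_ne_zero 2 hprime.ne_zero) hk]; ring⟩
  exact hprime.not_isUnit (isUnit_of_dvd_unit hdvd hunit)

/- Cubes prime to `λ = ζ - 1` are `≡ ±1 mod λ⁴`, so `λ⁴` would divide `±1` or `±3`; but `3` is
associated to `λ²`. -/
theorem cube_add_cube_add_cube_ne_zero_of_not_dvd {a b c : 𝓞 K} (ha : ¬ hζ.toInteger - 1 ∣ a)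
    (hb : ¬ hζ.toInteger - 1 ∣ b) (hc : ¬ hζ.toInteger - 1 ∣ c) : a ^ 3 + b ^ 3 + c ^ 3 ≠ 0 := by
  have hcube : ∀ x : 𝓞 K, ¬ hζ.toInteger - 1 ∣ x →
      ∃ e : 𝓞 K, (e = 1 ∨ e = -1) ∧ (hζ.toInteger - 1) ^ 4 ∣ x ^ 3 - e := by
    intro x hx
    rcases lambda_pow_four_dvd_cube_sub_one_or_add_one_of_lambda_not_dvd hζ hx with h | h
    · exact ⟨1, .inl rfl, h⟩
    · exact ⟨-1, .inr rfl, by rwa [sub_neg_eq_add]⟩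
  have h1 : ¬ (hζ.toInteger - 1) ^ 4 ∣ 1 := fun h ↦
    hζ.zeta_sub_one_prime'.not_isUnit (isUnit_of_dvd_one ((dvd_pow_self _ four_ne_zero).trans h))
  have h3 := hζ.not_toInteger_sub_one_pow_four_dvd_three
  set l := hζ.toInteger - 1
  obtain ⟨e₁, he₁, h₁⟩ := hcube a ha
  obtain ⟨e₂, he₂, h₂⟩ := hcube b hb
  obtain ⟨e₃, he₃, h₃⟩ := hcube c hc
  intro H
  have hdvd : l ^ 4 ∣ e₁ + e₂ + e₃ := by
    have := dvd_neg.mpr ((h₁.add h₂).add h₃)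
    rwa [show -(a ^ 3 - e₁ + (b ^ 3 - e₂) + (c ^ 3 - e₃)) = e₁ + e₂ + e₃ by
      linear_combination -H] at this
  rcases he₁ with rfl | rfl <;> rcases he₂ with rfl | rfl <;> rcases he₃ with rfl | rfl <;>
    norm_num at hdvd
  all_goals first | exact h1 hdvd | exact h3 hdvd

theorem cube_add_cube_add_cube_ne_zero_of_dvd {a b c : 𝓞 K} (hc : c ≠ 0)
    (hdvd : hζ.toInteger - 1 ∣ c) (hab : IsCoprime a b) (hac : IsCoprime a c)
    (hbc : IsCoprime b c) : a ^ 3 + b ^ 3 + c ^ 3 ≠ 0 := by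
  have hprime := hζ.zeta_sub_one_prime'
  intro H
  refine fermatLastTheoremForThreeGen hζ a b c (-1) hc
    (fun h ↦ hprime.not_isUnit (hac.isUnit_of_dvd' h hdvd))
    (fun h ↦ hprime.not_isUnit (hbc.isUnit_of_dvd' h hdvd)) hdvd hab ?_
  push_cast
  linear_combination H

end Eisenstein

theorem cube_add_cube_add_cube_ne_zero_of_isCoprime {K : Type*} [Field K] [NumberField K]
    [IsCyclotomicExtension {3} ℚ K] {a b c : 𝓞 K} (ha : a ≠ 0) (hb : b ≠ 0) (hc : c ≠ 0)
    (hab : IsCoprime a b) : a ^ 3 + b ^ 3 + c ^ 3 ≠ 0 := by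
  have hζ := IsCyclotomicExtension.zeta_spec 3 ℚ K
  intro H
  have hac := hab.of_cube_add_cube_add_cube_eq_zero H
  have hbc := hab.symm.of_cube_add_cube_add_cube_eq_zero (c := c) (by linear_combination H)
  by_cases hda : hζ.toInteger - 1 ∣ a
  · exact cube_add_cube_add_cube_ne_zero_of_dvd hζ ha hda hbc hab.symm hac.symm
      (by linear_combination H)
  by_cases hdb : hζ.toInteger - 1 ∣ b
  · exact cube_add_cube_add_cube_ne_zero_of_dvd hζ hb hdb hac.symm hbc.symm hab
      (by linear_combination H)
  by_cases hdc : hζ.toInteger - 1 ∣ c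
  · exact cube_add_cube_add_cube_ne_zero_of_dvd hζ hc hdc hab hac hbc H
  · exact cube_add_cube_add_cube_ne_zero_of_not_dvd hζ hda hdb hdc H

theorem fermatLastTheoremWith_three_of_isCyclotomicExtension (K : Type*) [Field K] [NumberField K]
    [IsCyclotomicExtension {3} ℚ K] : FermatLastTheoremWith K 3 := by
  have := IsCyclotomicExtension.Rat.three_pid K
  refine FermatLastTheoremWith.of_isFractionRing (R := 𝓞 K) <|
    .of_isCoprime three_ne_zero fun a b c ha hb hc hab H ↦ ?_
  exact cube_add_cube_add_cube_ne_zero_of_isCoprime ha hb (neg_ne_zero.mpr hc) hab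
    (by linear_combination H)

theorem isPrimitiveRoot_of_sq_eq_neg_three {K : Type*} [Field K] [CharZero K] {s : K}
    (hs : s ^ 2 = -3) : IsPrimitiveRoot ((-1 + s) / 2) 3 := by
  rw [← Polynomial.isRoot_cyclotomic_iff_charZero three_pos, Polynomial.cyclotomic_three]
  simp only [Polynomial.IsRoot.def, Polynomial.eval_add, Polynomial.eval_pow, Polynomial.eval_X,
    Polynomial.eval_one]
  linear_combination hs / 4

open IntermediateField in
theorem isCyclotomicExtension_three_of_sq_eq_neg_three {K : Type*} [Field K] [NumberField K]
    (hK : finrank ℚ K = 2) {s : K} (hs : s ^ 2 = -3) : IsCyclotomicExtension {3} ℚ K := by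
  set ω := (-1 + s) / 2
  have hω := isPrimitiveRoot_of_sq_eq_neg_three hs
  have hint : IsIntegral ℚ ω := .of_finite ℚ ω
  have htop : ℚ⟮ω⟯ = ⊤ := by
    refine eq_of_le_of_finrank_eq le_top ?_
    rw [adjoin.finrank hint, ← Polynomial.cyclotomic_eq_minpoly_rat hω three_pos,
      Polynomial.natDegree_cyclotomic, Nat.totient_prime Nat.prime_three, finrank_top', hK]
  refine (IsCyclotomicExtension.iff_singleton 3 ℚ K).mpr ⟨⟨ω, hω⟩, fun x ↦ ?_⟩
  have hx : x ∈ ℚ⟮ω⟯.toSubalgebra := by rw [htop]; exact mem_top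
  rw [adjoin_simple_toSubalgebra_of_isAlgebraic hint.isAlgebraic] at hx
  refine Algebra.adjoin_mono ?_ hx
  rintro _ rfl
  exact hω.pow_eq_one

section CurveE

variable {K : Type*} [Field K]

theorem curveE_Δ : (curveE K).Δ = -110592 := by
  simp only [curveE, Δ, b₂, b₄, b₆, b₈]
  norm_num

instance [CharZero K] : (curveE K).IsElliptic :=
  ⟨(by rw [curveE_Δ]; norm_num : (curveE K).Δ ≠ 0).isUnit⟩

theorem curveE_equation_iff {x y : K} :
    (curveE K).toAffine.Equation x y ↔ y ^ 2 = x ^ 3 + 16 := by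
  rw [equation_iff]
  simp only [curveE, zero_mul, add_zero]

theorem curveE_negY (x y : K) : (curveE K).toAffine.negY x y = -y := by
  simp only [negY, curveE, zero_mul, sub_zero]

theorem curveE_flex_Y_sq_mul_eq_zero {x y : K} (h : y ^ 2 = x ^ 3 + 16)
    (hx : x * (x ^ 3 + 64) = 0) : (y ^ 2 - 16) * (y ^ 2 + 48) = 0 := by
  linear_combination x ^ 2 * hx + (y ^ 2 + x ^ 3 + 48) * h

/- `3x (x³ + 64)` is the 3-division polynomial of `E`: its roots are the `x`-coordinates of
the flexes, where the tangent line meets `E` with multiplicity 3. -/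
theorem curveE_add_self_eq_neg [DecidableEq K] [CharZero K] {x y : K}
    (h : (curveE K).toAffine.Nonsingular x y) (hx : x * (x ^ 3 + 64) = 0) :
    Point.some _ _ h + Point.some _ _ h = -Point.some _ _ h := by
  have hxy := curveE_equation_iff.mp h.1
  have hy0 : y ≠ 0 := by
    rintro rfl
    have := curveE_flex_Y_sq_mul_eq_zero hxy hx
    norm_num at this
  have hy : y ≠ (curveE K).toAffine.negY x y := by
    rw [curveE_negY]
    exact fun h' ↦ hy0 (by linear_combination h' / 2)
  have hL : (curveE K).toAffine.slope x x y y = 3 * x ^ 2 / (2 * y) := by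
    rw [slope_of_Y_ne rfl hy, curveE_negY]
    simp only [curveE, mul_zero, zero_mul, add_zero, sub_zero, sub_neg_eq_add]
    ring
  have hX : (curveE K).toAffine.addX x x ((curveE K).toAffine.slope x x y y) = x := by
    rw [hL]
    simp only [addX, curveE, zero_mul, add_zero, sub_zero]
    field_simp
    linear_combination -3 * hx - 12 * x * hxy
  rw [Point.add_self_of_Y_ne hy, Point.neg_some, Point.some.injEq]
  refine ⟨hX, ?_⟩
  rw [addY, negAddY, hX, curveE_negY, curveE_negY]
  ring

theorem curveE_three_nsmul_eq_zero [DecidableEq K] [CharZero K]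
    (hflex : ∀ {x y : K}, y ^ 2 = x ^ 3 + 16 → x * (x ^ 3 + 64) = 0)
    (P : (curveE K).toAffine.Point) : 3 • P = 0 := by
  rcases P with _ | ⟨x, y, h⟩
  · exact nsmul_zero 3
  · rw [succ_nsmul, two_nsmul, curveE_add_self_eq_neg h (hflex (curveE_equation_iff.mp h.1)),
      neg_add_cancel]

theorem curveE_flex_of_fermatLastTheoremWith [CharZero K] (hF : FermatLastTheoremWith K 3)
    {s : K} (hs : s ^ 2 = -3) {x y : K} (h : y ^ 2 = x ^ 3 + 16) : x * (x ^ 3 + 64) = 0 := by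
  by_cases hx : x = 0
  · simp [hx]
  have hsy : (s * y) ^ 2 = 144 := by
    by_contra hne
    refine hF (12 + s * y) (12 - s * y) (-6 * x) ?_ ?_ (by simpa using hx) ?_
    · exact fun h0 ↦ hne (by linear_combination (s * y - 12) * h0)
    · exact fun h0 ↦ hne (by linear_combination (-(s * y) - 12) * h0)
    · linear_combination (72 * y ^ 2) * hs - 216 * h
  linear_combination (-x) * h - (x / 3) * hsy + (x * y ^ 2 / 3) * hs

theorem curveE_mem_of_flex [DecidableEq K] {s : K} (hs : s ^ 2 = -3) {x y : K}
    (h : y ^ 2 = x ^ 3 + 16) (hx : x * (x ^ 3 + 64) = 0) :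
    (x, y) ∈ ({0, -4, 2 - 2 * s, 2 + 2 * s} ×ˢ {4, -4, 4 * s, -4 * s} : Finset (K × K)) := by
  have hx' : x * (x + 4) * (x - (2 - 2 * s)) * (x - (2 + 2 * s)) = 0 := by
    linear_combination hx - 4 * x * (x + 4) * hs
  have hy' : (y - 4) * (y + 4) * (y - 4 * s) * (y + 4 * s) = 0 := by
    linear_combination curveE_flex_Y_sq_mul_eq_zero h hx - 16 * (y ^ 2 - 16) * hs
  simp only [Finset.mem_product, Finset.mem_insert, Finset.mem_singleton]
  simp only [mul_eq_zero, sub_eq_zero, add_eq_zero_iff_eq_neg, ← neg_mul] at hx' hy'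
  tauto

theorem curveE_natCard_bounds [CharZero K]
    (hflex : ∀ {x y : K}, y ^ 2 = x ^ 3 + 16 → x * (x ^ 3 + 64) = 0) {s : K} (hs : s ^ 2 = -3) :
    Finite (curveE K).toAffine.Point ∧ 3 < Nat.card (curveE K).toAffine.Point ∧
      Nat.card (curveE K).toAffine.Point < 3 ^ 3 := by
  classical
  set S := {xy : K × K | (curveE K).toAffine.Equation xy.1 xy.2}
  set X : Finset K := {0, -4, 2 - 2 * s, 2 + 2 * s}
  set Y : Finset K := {4, -4, 4 * s, -4 * s}
  have hsub : S ⊆ ↑(X ×ˢ Y) := by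
    rintro ⟨x, y⟩ h
    have h' := curveE_equation_iff.mp h
    exact curveE_mem_of_flex hs h' (hflex h')
  have hfin : S.Finite := (X ×ˢ Y).finite_toSet.subset hsub
  have hup : S.ncard ≤ 16 := calc
    S.ncard ≤ (X ×ˢ Y).card := by simpa using Set.ncard_le_ncard hsub
    _ = X.card * Y.card := Finset.card_product X Y
    _ ≤ 4 * 4 := Nat.mul_le_mul Finset.card_le_four Finset.card_le_four
  have hlow : 3 ≤ S.ncard := by
    have h3 : ({(0, 4), (0, -4), (-4, 4 * s)} : Set (K × K)).ncard = 3 :=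
      Set.ncard_eq_three.mpr ⟨_, _, _, by norm_num, by norm_num, by norm_num, rfl⟩
    rw [← h3]
    refine Set.ncard_le_ncard ?_ hfin
    rintro _ (rfl | rfl | rfl) <;> simp only [S, Set.mem_ofPred_eq, curveE_equation_iff]
    · norm_num
    · norm_num
    · linear_combination 16 * hs
  have hcard : Nat.card (curveE K).toAffine.Point = S.ncard + 1 :=
    (curveE K).toAffine.natCard_point hfin
  exact ⟨Nat.finite_of_card_ne_zero (by omega), by omega, by omega⟩

end CurveE

open Classical in
/-- Let `K` be a quadratic field in which `−3` is a square (so `K = ℚ(√−3)`) and let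
`E` be the elliptic curve `y² = x³ + 16` over `K`.  Then `E(K)_tors` is isomorphic to
`ℤ/3ℤ ⊕ ℤ/3ℤ`. -/
theorem torsion_x_cubed_plus_sixteen_sqrt_neg_three (K : Type*) [Field K]
    [NumberField K] (hK : Module.finrank ℚ K = 2) (h3 : ∃ s : K, s ^ 2 = -3) :
    Nonempty (AddCommGroup.torsion (curveE K).toAffine.Point ≃+ ZMod 3 × ZMod 3) := by
  obtain ⟨s, hs⟩ := h3
  have := isCyclotomicExtension_three_of_sq_eq_neg_three hK hs
  have hflex : ∀ {x y : K}, y ^ 2 = x ^ 3 + 16 → x * (x ^ 3 + 64) = 0 :=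
    curveE_flex_of_fermatLastTheoremWith (fermatLastTheoremWith_three_of_isCyclotomicExtension K) hs
  have h3P := curveE_three_nsmul_eq_zero hflex
  obtain ⟨hfin, hlow, hup⟩ := curveE_natCard_bounds hflex hs
  let _ := AddCommGroup.zmodModule h3P
  obtain ⟨e⟩ := nonempty_linearEquiv_zmod_prod_of_card hlow hup
  have htors : IsAddTorsion (curveE K).toAffine.Point := fun P ↦
    isOfFinAddOrder_iff_nsmul_eq_zero.mpr ⟨3, three_pos, h3P P⟩
  exact ⟨htors.torsionAddEquiv.trans e.toAddEquiv⟩
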